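/- The rank-17 lattice H ⊕ D₈(−1) ⊕ D₄(−1) ⊕ A₃(−1) is isometric to the lattice H ⊕ D₇(−1) ⊕ D₄(−1)^{⊕2}; that is, for the corresponding 17×17 block-diagonal Gram matrices G₁ and G₂ there exists an integer matrix P with det P = ±1 and Pᵀ·G₁·P = G₂. (These are the two presentations of the polarizing lattice L̃ of the three-dimensional family of Jacobian Kummer surfaces X̃ arising from the two Jacobian elliptic fibrations with trivial Mordell–Weil group on a generic Jacobian Kummer surface.) -/
import Mathlib


open Matrix

/-- Square integer matrices of size `n`. -/
abbrev IntMat (n : ℕ) := Matrix (Fin n) (Fin n) ℤ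

/-- Block-diagonal (orthogonal) direct sum of Gram matrices. -/
def dsum {m n : ℕ} (A : IntMat m) (B : IntMat n) : IntMat (m + n) :=
  Matrix.reindex finSumFinEquiv finSumFinEquiv (Matrix.fromBlocks A 0 0 B)

infixl:65 " ⊕ₘ " => dsum

/-- Gram matrix of the hyperbolic plane `H`. -/
def HypMat : IntMat 2 := !![0, 1; 1, 0]

/-- The standard Cartan matrix of the root system `Aₙ`. -/
def CartanA (n : ℕ) : IntMat n :=
  Matrix.of fun i j =>
    if i = j then 2 else if (i : ℕ) + 1 = j ∨ (j : ℕ) + 1 = i then -1 else 0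

/-- The standard Cartan matrix of the root system `Dₙ` (`n ≥ 3`): a chain on the
nodes `0, …, n-2` together with the node `n-1` attached to the node `n-3`. -/
def CartanD (n : ℕ) : IntMat n :=
  Matrix.of fun i j =>
    if i = j then 2
    else if ((i : ℕ) + 1 = j ∨ (j : ℕ) + 1 = i) ∧ (i : ℕ) + 1 ≠ n ∧ (j : ℕ) + 1 ≠ n then -1
    else if ((i : ℕ) + 3 = n ∧ (j : ℕ) + 1 = n) ∨ ((j : ℕ) + 3 = n ∧ (i : ℕ) + 1 = n) then -1
    else 0

/-- The standard Cartan matrix of the root system `E₇`: a chain on the nodes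
`0, …, 5` with the node `6` attached to the node `2`. -/
def CartanE₇ : IntMat 7 :=
  !![ 2, -1,  0,  0,  0,  0,  0;
     -1,  2, -1,  0,  0,  0,  0;
      0, -1,  2, -1,  0,  0, -1;
      0,  0, -1,  2, -1,  0,  0;
      0,  0,  0, -1,  2, -1,  0;
      0,  0,  0,  0, -1,  2,  0;
      0,  0, -1,  0,  0,  0,  2]

/-- The standard Cartan matrix of the root system `E₈`: a chain on the nodes
`0, …, 6` with the node `7` attached to the node `2`. -/
def CartanE₈ : IntMat 8 :=
  !![ 2, -1,  0,  0,  0,  0,  0,  0;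
     -1,  2, -1,  0,  0,  0,  0,  0;
      0, -1,  2, -1,  0,  0,  0, -1;
      0,  0, -1,  2, -1,  0,  0,  0;
      0,  0,  0, -1,  2, -1,  0,  0;
      0,  0,  0,  0, -1,  2, -1,  0;
      0,  0,  0,  0,  0, -1,  2,  0;
      0,  0, -1,  0,  0,  0,  0,  2]

/-- Two integral lattices given by Gram matrices `G₁, G₂` of rank `N` are isometric:
there is `P ∈ GL(N, ℤ)` with `Pᵀ G₁ P = G₂`. -/
def LatticeIsometric {N : ℕ} (G₁ G₂ : IntMat N) : Prop :=
  ∃ P : IntMat N, (P.det = 1 ∨ P.det = -1) ∧ Pᵀ * G₁ * P = G₂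

/-- Gram matrix of `H ⊕ D₈(-1) ⊕ D₄(-1) ⊕ A₃(-1)`. -/
def GramKum₁ : IntMat 17 :=
  HypMat ⊕ₘ (-CartanD 8) ⊕ₘ (-CartanD 4) ⊕ₘ (-CartanA 3)

/-- Gram matrix of `H ⊕ D₇(-1) ⊕ D₄(-1)^{⊕2}`. -/
def GramKum₂ : IntMat 17 :=
  HypMat ⊕ₘ (-CartanD 7) ⊕ₘ (-CartanD 4) ⊕ₘ (-CartanD 4)

private def Pmat : IntMat 17 :=
  !![3, 22, 0, 4, 1, -8, 2, 2, 4, 5, -3, -3, 3, -3, 0, -3, -3;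
    22, 147, 0, 28, 7, -56, 14, 14, 28, 35, -21, -21, 21, -21, 0, -21, -21;
    -2, -14, 0, -3, 0, 5, -1, -1, -3, -3, 2, 2, -2, 2, 0, 2, 2;
    3, 21, 0, 3, 2, -8, 2, 3, 3, 5, -3, -3, 3, -3, 0, -3, -3;
    1, 7, 1, 0, 1, -3, 1, 2, 0, 2, -1, -1, 1, -1, 0, -1, -1;
    2, 14, 1, 2, 1, -5, 1, 3, 1, 4, -2, -2, 2, -2, 0, -2, -2;
    2, 14, 1, 2, 1, -5, 1, 3, 1, 4, -3, -1, 3, -2, 0, -2, -2;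
    -1, -7, 1, -2, 0, 3, -1, 1, -3, 0, -1, 2, 0, 1, 0, 1, 1;
    -1, -7, 1, -2, 0, 3, -1, 0, -2, -1, 0, 1, 0, 1, 0, 1, 1;
    2, 14, 1, 2, 1, -5, 1, 2, 2, 4, -3, -1, 2, -2, 0, -2, -2;
    -3, -21, 0, -4, -1, 8, -2, -2, -4, -5, 3, 3, -3, 3, -1, 4, 3;
    0, 0, 0, 0, 0, 0, 0, 0, 0, 0, 0, 0, 0, 1, -2, 1, 1;
    -3, -21, 0, -4, -1, 8, -2, -2, -4, -5, 3, 3, -3, 3, -1, 3, 4;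
    3, 21, 0, 4, 1, -8, 2, 2, 4, 5, -3, -3, 3, -3, -1, -2, -2;
    1, 7, 0, 1, 0, -2, 0, 1, 2, 2, -1, -1, 1, -1, 0, -1, -1;
    -3, -21, 0, -4, -1, 8, -3, -1, -3, -5, 3, 3, -3, 3, 0, 3, 3;
    -1, -7, 0, -1, -1, 3, -1, 0, -1, -2, 1, 1, -1, 1, 0, 1, 1]

private def Qmat : IntMat 17 :=
  !![147, 22, 49, -49, 21, -7, -21, 35, 7, -35, 42, -21, 42, -42, -35, 42, -7;
    22, 3, 7, -7, 3, -1, -3, 5, 1, -5, 6, -3, 6, -6, -5, 6, -1;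
    -14, -2, -4, 4, -2, 1, 2, -4, 0, 4, -4, 2, -4, 4, 3, -4, 1;
    -28, -4, -8, 9, -5, 2, 4, -7, -1, 7, -8, 4, -8, 8, 6, -8, 2;
    -14, -2, -3, 5, -3, 1, 2, -4, 0, 4, -4, 2, -4, 4, 3, -4, 1;
    7, 1, 4, -2, 0, 0, -1, 1, 1, -1, 2, -1, 2, -2, -1, 1, 1;
    -28, -4, -7, 9, -4, 1, 4, -7, -1, 7, -8, 4, -8, 8, 7, -9, 3;
    -21, -3, -6, 7, -3, 1, 3, -5, -1, 5, -6, 3, -6, 6, 5, -6, 2;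
    -28, -4, -8, 9, -4, 1, 4, -7, -1, 7, -8, 4, -8, 8, 7, -8, 2;
    -14, -2, -4, 4, -2, 1, 2, -3, -1, 3, -4, 2, -4, 4, 4, -4, 0;
    7, 1, 3, -3, 1, 0, 0, 1, 0, -2, 2, -1, 2, -2, -1, 2, -1;
    14, 2, 5, -5, 2, -1, -1, 3, 0, -3, 4, -2, 4, -4, -3, 4, -1;
    -7, -1, -2, 2, -1, 0, 2, -2, 0, 1, -2, 1, -2, 2, 2, -2, 0;
    42, 6, 14, -14, 6, -2, -6, 10, 2, -10, 11, -5, 11, -12, -10, 12, -2;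
    63, 9, 21, -21, 9, -3, -9, 15, 3, -15, 17, -9, 17, -17, -15, 18, -3;
    42, 6, 14, -14, 6, -2, -6, 10, 2, -10, 12, -6, 11, -11, -10, 12, -2;
    42, 6, 14, -14, 6, -2, -6, 10, 2, -10, 11, -6, 12, -11, -10, 12, -2]

private lemma PQ : Pmat * Qmat = 1 := by decide

private lemma Pgram : Pmatᵀ * GramKum₁ * Pmat = GramKum₂ := by decide

/-- The two presentations of the polarizing lattice `L̃` of the three-dimensional
family of Jacobian Kummer surfaces, coming from the two Jacobian elliptic fibrations
with trivial Mordell–Weil group on a generic Jacobian Kummer surface, are isometric. -/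
theorem kummer_lattice_presentations : LatticeIsometric GramKum₁ GramKum₂ := by
  refine ⟨Pmat, ?_, Pgram⟩
  have h : IsUnit Pmat.det := Matrix.isUnit_det_of_right_inverse PQ
  exact Int.isUnit_iff.mp h
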